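/- arXiv:2602.15713 — 2 statements merged into one kernel-verified Lean document; each statement's English description precedes it below -/
import Mathlib

section
/- Let H be a complex Hilbert space and let T be a bounded linear operator on H. If the Hilbert space dimensions of the kernels N(T) and N(T*) are equal (as cardinals), then m(T) = m(T*). -/
/-!
If `ker T = 0` and `T*` is bounded below by `c > 0`, then `T*` has closed range whose orthogonal
complement is `ker T = 0`, so `T*` is onto. Writing `x = T* y` gives
`‖x‖² = ⟪T x, y⟫ ≤ ‖T x‖ ‖y‖ ≤ ‖T x‖ ‖x‖ / c`, hence `m(T) ≥ m(T*)`. When both kernels are trivial,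
this applied to `T` and to `T*` gives equality; otherwise both kernels are nontrivial and both
minimum moduli vanish.
-/

noncomputable section

/-- The minimum modulus of a bounded operator. -/
def minMod {E F : Type*} [NormedAddCommGroup E] [NormedSpace ℂ E]
    [NormedAddCommGroup F] [NormedSpace ℂ F] (T : E →L[ℂ] F) : ℝ :=
  ⨅ x : {x : E // ‖x‖ = 1}, ‖T x.1‖

open ContinuousLinearMap

section NormedSpace

variable {E F : Type*} [NormedAddCommGroup E] [NormedSpace ℂ E]
  [NormedAddCommGroup F] [NormedSpace ℂ F] (T : E →L[ℂ] F)

lemma minMod_nonneg : 0 ≤ minMod T :=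
  Real.iInf_nonneg fun _ => norm_nonneg _

lemma minMod_le_norm_apply {x : E} (hx : ‖x‖ = 1) : minMod T ≤ ‖T x‖ :=
  ciInf_le ⟨0, by rintro _ ⟨y, rfl⟩; exact norm_nonneg _⟩ (⟨x, hx⟩ : {x : E // ‖x‖ = 1})

lemma minMod_mul_norm_le (x : E) : minMod T * ‖x‖ ≤ ‖T x‖ := by
  rcases eq_or_ne x 0 with rfl | hx
  · simp
  have hx' : 0 < ‖x‖ := norm_pos_iff.mpr hx
  have h := minMod_le_norm_apply T (norm_smul_inv_norm (𝕜 := ℂ) hx)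
  rw [map_smul, norm_smul, norm_inv, RCLike.norm_ofReal, abs_norm] at h
  rwa [le_inv_mul_iff₀ hx', mul_comm] at h

lemma le_minMod [Nontrivial E] {c : ℝ} (h : ∀ x, c * ‖x‖ ≤ ‖T x‖) : c ≤ minMod T := by
  obtain ⟨x₀, hx₀⟩ := exists_ne (0 : E)
  have : Nonempty {x : E // ‖x‖ = 1} := ⟨⟨_, norm_smul_inv_norm (𝕜 := ℂ) hx₀⟩⟩
  exact le_ciInf fun ⟨x, hx⟩ => by simpa [hx] using h x

lemma minMod_eq_zero_of_ker_ne_bot (hT : T.ker ≠ ⊥) : minMod T = 0 := by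
  obtain ⟨x, hxT, hx⟩ := (Submodule.ne_bot_iff _).mp hT
  have h := minMod_mul_norm_le T x
  rw [show T x = 0 from hxT, norm_zero] at h
  exact le_antisymm (nonpos_of_mul_nonpos_left h (norm_pos_iff.mpr hx)) (minMod_nonneg T)

lemma nontrivial_domain_of_minMod_pos (hT : 0 < minMod T) : Nontrivial E := by
  by_contra hE
  rw [not_nontrivial_iff_subsingleton] at hE
  have : IsEmpty {x : E // ‖x‖ = 1} := ⟨fun ⟨x, hx⟩ => by simp [Subsingleton.elim x 0] at hx⟩
  simp [minMod, Real.iInf_of_isEmpty] at hT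

lemma nontrivial_codomain_of_minMod_pos (hT : 0 < minMod T) : Nontrivial F := by
  have := nontrivial_domain_of_minMod_pos T hT
  obtain ⟨x, hx⟩ := exists_ne (0 : E)
  have hTx : 0 < ‖T x‖ := (mul_pos hT (norm_pos_iff.mpr hx)).trans_le (minMod_mul_norm_le T x)
  exact nontrivial_of_ne _ _ (norm_pos_iff.mp hTx)

lemma ContinuousLinearMap.isClosed_range_of_mul_norm_le [CompleteSpace E] {c : ℝ} (hc : 0 < c)
    (h : ∀ x, c * ‖x‖ ≤ ‖T x‖) : IsClosed (T.range : Set F) := by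
  have hanti : AntilipschitzWith (⟨c⁻¹, (inv_pos.mpr hc).le⟩ : NNReal) T :=
    T.antilipschitz_of_bound fun x => by
      change ‖x‖ ≤ c⁻¹ * _
      rw [le_inv_mul_iff₀ hc]; exact h x
  exact hanti.isClosed_range T.uniformContinuous

end NormedSpace

section InnerProductSpace

variable {E F : Type*} [NormedAddCommGroup E] [InnerProductSpace ℂ E] [CompleteSpace E]
  [NormedAddCommGroup F] [InnerProductSpace ℂ F] [CompleteSpace F]

lemma ContinuousLinearMap.range_eq_top_of_isClosed_of_ker_adjoint_eq_bot (T : E →L[ℂ] F)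
    (hT : IsClosed (T.range : Set F)) (hker : (adjoint T).ker = ⊥) : T.range = ⊤ := by
  have := hT.completeSpace_coe
  rw [← Submodule.orthogonal_eq_bot_iff, orthogonal_range, hker]

lemma ContinuousLinearMap.mul_norm_le_of_mul_norm_le_adjoint (T : E →L[ℂ] F) (hT : T.ker = ⊥) {c : ℝ}
    (hc : 0 < c) (hS : ∀ y, c * ‖y‖ ≤ ‖adjoint T y‖) (x : E) : c * ‖x‖ ≤ ‖T x‖ := by
  have hsurj := (adjoint T).range_eq_top_of_isClosed_of_ker_adjoint_eq_bot
    ((adjoint T).isClosed_range_of_mul_norm_le hc hS) (by rwa [adjoint_adjoint])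
  obtain ⟨y, hy⟩ := LinearMap.range_eq_top.mp hsurj x
  rw [coe_coe] at hy
  subst hy
  rcases (norm_nonneg (adjoint T y)).eq_or_lt with h0 | hpos
  · rw [← h0, mul_zero]; exact norm_nonneg _
  refine (mul_le_mul_iff_left₀ hpos).mp ?_
  calc c * ‖adjoint T y‖ * ‖adjoint T y‖ = ‖adjoint T y‖ ^ 2 * c := by ring
    _ = RCLike.re (inner ℂ (T (adjoint T y)) y) * c := by
      rw [← adjoint_inner_right, inner_self_eq_norm_sq]
    _ ≤ ‖T (adjoint T y)‖ * ‖y‖ * c := by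
      gcongr; exact (RCLike.re_le_norm _).trans (norm_inner_le_norm _ _)
    _ ≤ ‖T (adjoint T y)‖ * ‖adjoint T y‖ := by
      rw [mul_assoc]; gcongr; rw [mul_comm]; exact hS y

lemma minMod_adjoint_le_of_ker_eq_bot (T : E →L[ℂ] F) (hT : T.ker = ⊥) :
    minMod (adjoint T) ≤ minMod T := by
  rcases (minMod_nonneg (adjoint T)).eq_or_lt with h0 | hpos
  · rw [← h0]; exact minMod_nonneg T
  have := nontrivial_codomain_of_minMod_pos _ hpos
  exact le_minMod T (T.mul_norm_le_of_mul_norm_le_adjoint hT hpos (minMod_mul_norm_le _))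

end InnerProductSpace

/-- If `dim N(T) = dim N(T*)` (as cardinals), then `m(T) = m(T*)`. -/
theorem minMod_eq_minMod_adjoint_of_rank_ker_eq
    {H : Type*} [NormedAddCommGroup H] [InnerProductSpace ℂ H] [CompleteSpace H]
    (T : H →L[ℂ] H)
    (h : Module.rank ℂ (LinearMap.ker (T : H →ₗ[ℂ] H))
        = Module.rank ℂ (LinearMap.ker ((ContinuousLinearMap.adjoint T : H →L[ℂ] H) : H →ₗ[ℂ] H))) :
    minMod T = minMod (ContinuousLinearMap.adjoint T) := by
  have hker : T.ker = ⊥ ↔ (adjoint T).ker = ⊥ := by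
    rw [← Submodule.rank_eq_zero, h, Submodule.rank_eq_zero]
  by_cases hT : T.ker = ⊥
  · refine le_antisymm ?_ (minMod_adjoint_le_of_ker_eq_bot T hT)
    simpa only [adjoint_adjoint] using minMod_adjoint_le_of_ker_eq_bot _ (hker.mp hT)
  · rw [minMod_eq_zero_of_ker_ne_bot T hT, minMod_eq_zero_of_ker_ne_bot _ (mt hker.mpr hT)]
end
end

section
/- Let u be a nonconstant inner function and let S_u : K_u → K_u be the compressed shift, i.e., the truncated Toeplitz operator with symbol e₁ (S_u f = P_{K_u}(e₁ · f) for f ∈ K_u). Then m(S_u) = |u(0)| = m(S_u*), and both S_u and S_u* attain their minimum modulus. -/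
open MeasureTheory Complex
open scoped InnerProductSpace ENNReal

noncomputable section

namespace DTTO

instance fact2pi : Fact (0 < 2 * Real.pi) := ⟨by positivity⟩

/-- The circle, realized as `ℝ / 2πℤ`. -/
abbrev 𝕋c := AddCircle (2 * Real.pi)

/-- Normalized Haar (Lebesgue) measure on the circle. -/
abbrev μT : Measure 𝕋c := AddCircle.haarAddCircle

/-- `L²(𝕋)`. -/
abbrev L2 := Lp ℂ 2 μT

/-- `L∞(𝕋)`. -/
abbrev Linf := Lp ℂ ⊤ μT

lemma memL2_smul (φ : Linf) (f : L2) : MemLp (⇑φ • ⇑f) 2 μT :=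
  (Lp.memLp f).smul (Lp.memLp φ)

/-- Multiplication operator `M_φ : L² → L²` by a function `φ ∈ L∞`. -/
def Mmul (φ : Linf) : L2 →L[ℂ] L2 :=
  LinearMap.mkContinuous
    { toFun := fun f => (memL2_smul φ f).toLp _
      map_add' := fun f g => by
        refine Lp.ext ?_
        filter_upwards [MemLp.coeFn_toLp (memL2_smul φ (f + g)),
          MemLp.coeFn_toLp (memL2_smul φ f), MemLp.coeFn_toLp (memL2_smul φ g),
          Lp.coeFn_add f g,
          Lp.coeFn_add ((memL2_smul φ f).toLp _) ((memL2_smul φ g).toLp _)] with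
            x h1 h2 h3 h4 h5
        rw [h1, h5]
        simp only [Pi.add_apply, h2, h3]
        simp only [Pi.smul_apply', h4, Pi.add_apply, smul_add]
      map_smul' := fun c f => by
        refine Lp.ext ?_
        filter_upwards [MemLp.coeFn_toLp (memL2_smul φ (c • f)),
          MemLp.coeFn_toLp (memL2_smul φ f),
          Lp.coeFn_smul c f,
          Lp.coeFn_smul c ((memL2_smul φ f).toLp _)] with x h1 h2 h3 h4
        rw [h1, RingHom.id_apply, h4]
        simp only [Pi.smul_apply, Pi.smul_apply', h2, h3]
        exact smul_comm _ _ _ }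
    ‖φ‖ (fun f => by
      simp only [LinearMap.coe_mk, AddHom.coe_mk]
      rw [Lp.norm_toLp, Lp.norm_def, Lp.norm_def]
      rw [← ENNReal.toReal_mul]
      refine ENNReal.toReal_mono ?_ ?_
      · exact ENNReal.mul_ne_top (Lp.eLpNorm_ne_top φ) (Lp.eLpNorm_ne_top f)
      · exact eLpNorm_smul_le_eLpNorm_top_mul_eLpNorm 2 (Lp.aestronglyMeasurable f) ⇑φ)

/-- The canonical inclusion `L∞ ⊆ L²` (the measure is finite). -/
def toL2 (φ : Linf) : L2 := ((Lp.memLp φ).mono_exponent le_top).toLp _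

/-- The Hardy space `H²`, the closed linear span in `L²` of the exponentials `e_n`, `n ≥ 0`. -/
def H2 : Submodule ℂ L2 :=
  (Submodule.span ℂ (Set.range fun n : ℕ => (fourierLp 2 (n : ℤ) : L2))).topologicalClosure

instance : CompleteSpace H2 := (Submodule.isClosed_topologicalClosure _).completeSpace_coe

/-- `H²₋ = L² ⊖ H²`. -/
def Hminus : Submodule ℂ L2 := H2ᗮ

instance : CompleteSpace Hminus := (Submodule.isClosed_orthogonal _).completeSpace_coe

/-- `H∞ = H² ∩ L∞`. -/
def MemHinf (φ : Linf) : Prop := toL2 φ ∈ H2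

/-- An inner function: an element of `H² ∩ L∞` of modulus one a.e. -/
structure IsInnerFn (u : Linf) : Prop where
  memH2 : MemHinf u
  unimod : ∀ᵐ z ∂μT, ‖u z‖ = 1

/-- `u` is nonconstant (not a.e. equal to a constant). -/
def Nonconst (u : Linf) : Prop := ¬ ∃ c : ℂ, (⇑u : 𝕋c → ℂ) =ᵐ[μT] fun _ => c

/-- The subspace `uH²` of `L²`. -/
def uH2 (u : Linf) : Submodule ℂ L2 := H2.map (Mmul u).toLinearMap

/-- The model space `K_u = H² ⊖ uH² = H² ∩ (uH²)ᗮ`. -/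
def Ku (u : Linf) : Submodule ℂ L2 := H2 ⊓ (uH2 u)ᗮ

lemma isClosed_Ku (u : Linf) : IsClosed ((Ku u : Set L2)) := by
  have h : (Ku u : Set L2) = (H2 : Set L2) ∩ ((uH2 u)ᗮ : Set L2) := rfl
  rw [h]
  exact (Submodule.isClosed_topologicalClosure _).inter (Submodule.isClosed_orthogonal _)

instance (u : Linf) : CompleteSpace (Ku u) := (isClosed_Ku u).completeSpace_coe

/-- `K_u^⊥ = L² ⊖ K_u`. -/
def KuP (u : Linf) : Submodule ℂ L2 := (Ku u)ᗮ

instance (u : Linf) : CompleteSpace (KuP u) := (Submodule.isClosed_orthogonal _).completeSpace_coe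

/-- Dual truncated Toeplitz operator `D_φ` on `K_u^⊥`. -/
def Dop (u φ : Linf) : KuP u →L[ℂ] KuP u :=
  Submodule.orthogonalProjectionOnto (KuP u) ∘L Mmul φ ∘L (KuP u).subtypeL

/-- Truncated Toeplitz operator `A_φ` on `K_u`. -/
def Aop (u φ : Linf) : Ku u →L[ℂ] Ku u :=
  Submodule.orthogonalProjectionOnto (Ku u) ∘L Mmul φ ∘L (Ku u).subtypeL

/-- The operator `B_φ : K_u → K_u^⊥`, `B_φ f = (I - P_{K_u})(φ f)`. -/
def Bop (u φ : Linf) : Ku u →L[ℂ] KuP u :=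
  Submodule.orthogonalProjectionOnto (KuP u) ∘L Mmul φ ∘L (Ku u).subtypeL

/-- Toeplitz operator `T_φ : H² → H²`. -/
def Top (φ : Linf) : H2 →L[ℂ] H2 :=
  Submodule.orthogonalProjectionOnto H2 ∘L Mmul φ ∘L H2.subtypeL

/-- Hankel operator `H_φ : H² → H²₋`. -/
def Hop (φ : Linf) : H2 →L[ℂ] Hminus :=
  Submodule.orthogonalProjectionOnto Hminus ∘L Mmul φ ∘L H2.subtypeL

/-- The exponential `e₁(ζ) = ζ` as an element of `L∞`. -/
def e1 : Linf := fourierLp ⊤ 1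

/-- The exponential `e₋₁(ζ) = ζ̄` as an element of `L∞`. -/
def eneg1 : Linf := fourierLp ⊤ (-1)

/-- The operator `Q : H²₋ → H²₋`, `Q g = P₋(e₁ g)`. -/
def Qop : Hminus →L[ℂ] Hminus :=
  Submodule.orthogonalProjectionOnto Hminus ∘L Mmul e1 ∘L Hminus.subtypeL

/-- `u(0)`, the 0-th Fourier coefficient. -/
def coef0 (u : Linf) : ℂ := fourierCoeff (⇑u) 0

/-- Minimum modulus of a bounded operator. -/
def minMod {E F : Type*} [NormedAddCommGroup E] [NormedSpace ℂ E]
    [NormedAddCommGroup F] [NormedSpace ℂ F] (T : E →L[ℂ] F) : ℝ :=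
  ⨅ x : {x : E // ‖x‖ = 1}, ‖T x.1‖

/-- Complex conjugation on `L∞`. -/
lemma memLinf_star (φ : Linf) : MemLp (fun z => (starRingEnd ℂ) (φ z)) ⊤ μT := by
  refine ⟨continuous_star.comp_aestronglyMeasurable (Lp.aestronglyMeasurable φ), ?_⟩
  rw [eLpNorm_congr_norm_ae (g := ⇑φ) (Filter.Eventually.of_forall fun z => norm_star _)]
  exact Lp.eLpNorm_lt_top φ

/-- The complex conjugate `φ̄ ∈ L∞` of `φ ∈ L∞`. -/
def conjL (φ : Linf) : Linf := (memLinf_star φ).toLp _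

lemma memLinf_mul (φ ψ : Linf) : MemLp (⇑φ • ⇑ψ) ⊤ μT :=
  (Lp.memLp ψ).smul (Lp.memLp φ)

/-- The pointwise product of two elements of `L∞`. -/
def mulL (φ ψ : Linf) : Linf := (memLinf_mul φ ψ).toLp _

end DTTO

namespace DTTO

lemma inner_fourierLp_eq_zero {m n : ℤ} (h : m ≠ n) :
    (inner ℂ (fourierLp 2 m : L2) (fourierLp 2 n : L2) : ℂ) = 0 := by
  have hcoe := congrFun (coe_fourierBasis (T := 2 * Real.pi))
  have h2 := (fourierBasis (T := 2 * Real.pi)).orthonormal.2 (i := m) (j := n) h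
  simpa only [hcoe] using h2

lemma span_le_orth_em1 :
    Submodule.span ℂ (Set.range fun n : ℕ => (fourierLp 2 (n : ℤ) : L2))
      ≤ (ℂ ∙ (fourierLp 2 (-1) : L2))ᗮ := by
  rw [Submodule.span_le]
  rintro x ⟨n, rfl⟩
  rw [SetLike.mem_coe, Submodule.mem_orthogonal]
  intro w hw
  obtain ⟨c, rfl⟩ := Submodule.mem_span_singleton.1 hw
  rw [inner_smul_left, inner_fourierLp_eq_zero (by omega : (-1 : ℤ) ≠ (n : ℤ)), mul_zero]

lemma H2_le_orth_em1 : H2 ≤ (ℂ ∙ (fourierLp 2 (-1) : L2))ᗮ :=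
  Submodule.topologicalClosure_minimal _ span_le_orth_em1 (Submodule.isClosed_orthogonal _)

/-- `e₋₁ ∈ H²₋`. -/
lemma em1_mem : (fourierLp 2 (-1) : L2) ∈ Hminus := by
  unfold Hminus
  rw [Submodule.mem_orthogonal]
  intro v hv
  have h := H2_le_orth_em1 hv
  rw [Submodule.mem_orthogonal] at h
  exact inner_eq_zero_symm.mp (h _ (Submodule.mem_span_singleton_self _))

/-- `e₋₁` as an element of `H²₋`. -/
def em1 : Hminus := ⟨(fourierLp 2 (-1) : L2), em1_mem⟩

/-- For `f ∈ K_u`, the function `u f ∈ uH² ⊆ K_u^⊥`. -/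
lemma mul_mem_KuP (u : Linf) (f : Ku u) : Mmul u (f : L2) ∈ KuP u := by
  unfold KuP
  rw [Submodule.mem_orthogonal]
  intro v hv
  have hv2 : v ∈ (uH2 u)ᗮ := (Submodule.mem_inf.1 hv).2
  have hm : Mmul u (f : L2) ∈ uH2 u :=
    Submodule.mem_map_of_mem (Submodule.mem_inf.1 f.2).1
  rw [Submodule.mem_orthogonal] at hv2
  exact inner_eq_zero_symm.mp (hv2 _ hm)

lemma Ku_le_H2 (u : Linf) : Ku u ≤ H2 := inf_le_left

/-- The inclusion `K_u ⊆ H²` as a continuous linear map. -/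
def KuIncl (u : Linf) : Ku u →L[ℂ] H2 :=
  LinearMap.mkContinuous (Submodule.inclusion (Ku_le_H2 u)) 1
    (fun f => by rw [one_mul]; exact le_of_eq rfl)

end DTTO

/-!
On `K_u` the compressed shift and its adjoint are `S_u f = z f - ⟪u, z f⟫ u` and
`S_u* f = z̄ (f - f(0))`. Hence `‖S_u f‖² = ‖f‖² - |⟪k̃₀, f⟫|²` and `‖S_u* f‖² = ‖f‖² - |⟪k₀, f⟫|²`,
where `k₀ = 1 - \overline{u(0)} u` is the reproducing kernel at `0` and `k̃₀ = z̄ (u - u(0))` its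
conjugate; both have `‖k‖² = 1 - |u(0)|²`, which is positive because `u` is nonconstant.
An operator with `‖T x‖² = ‖x‖² - |⟪k, x⟫|²` has minimum modulus `√(1 - ‖k‖²)`, attained at
`k / ‖k‖`.
-/

namespace DTTO

local notation "⟪" x ", " y "⟫" => @inner ℂ _ _ x y

local notation:max "𝐞" n:max => (fourierLp 2 n : L2)

open ComplexConjugate

section MinModulus

variable {E F : Type*} [NormedAddCommGroup E] [NormedAddCommGroup F] [NormedSpace ℂ F]

lemma minMod_eq_of_forall_le [NormedSpace ℂ E] {T : E →L[ℂ] F} {a : ℝ}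
    (hle : ∀ x, ‖x‖ = 1 → a ≤ ‖T x‖) {x₀ : E} (hx₀ : ‖x₀‖ = 1) (hTx₀ : ‖T x₀‖ = a) :
    minMod T = a := by
  have : Nonempty {x : E // ‖x‖ = 1} := ⟨⟨x₀, hx₀⟩⟩
  refine le_antisymm ?_ (le_ciInf fun x => hle x.1 x.2)
  exact (ciInf_le ⟨0, by rintro _ ⟨x, rfl⟩; exact norm_nonneg _⟩ ⟨x₀, hx₀⟩).trans_eq hTx₀

lemma norm_sub_inner_smul_sq [InnerProductSpace ℂ E] (x : E) {y : E} (hy : ‖y‖ = 1) :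
    ‖x - ⟪y, x⟫ • y‖ ^ 2 = ‖x‖ ^ 2 - ‖⟪y, x⟫‖ ^ 2 := by
  rw [@norm_sub_sq ℂ, norm_smul, hy, inner_smul_right, ← inner_conj_symm x y, Complex.mul_conj',
    ← Complex.ofReal_pow, RCLike.re_to_complex, Complex.ofReal_re]
  ring

theorem minMod_eq_of_norm_sq_apply [InnerProductSpace ℂ E] {T : E →L[ℂ] F} {k : E} {a : ℝ}
    (ha₀ : 0 ≤ a) (ha₁ : a < 1) (hk : ‖k‖ ^ 2 = 1 - a ^ 2)
    (hT : ∀ x, ‖T x‖ ^ 2 = ‖x‖ ^ 2 - ‖⟪k, x⟫‖ ^ 2) :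
    minMod T = a ∧ ∃ x, ‖x‖ = 1 ∧ ‖T x‖ = minMod T := by
  have hk₀ : k ≠ 0 := by
    rintro rfl
    rw [norm_zero] at hk
    nlinarith
  set x₀ : E := ((‖k‖ : ℂ))⁻¹ • k
  have hx₀ : ‖x₀‖ = 1 := norm_smul_inv_norm hk₀
  have hTx₀ : ‖T x₀‖ = a := by
    rw [← sq_eq_sq₀ (norm_nonneg _) ha₀, hT, hx₀, inner_smul_right, inner_self_eq_norm_sq_to_K]
    simp only [norm_mul, norm_pow, norm_inv, Complex.norm_real, norm_norm, RCLike.norm_ofReal,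
      abs_norm]
    field_simp
    linarith
  have hmin : minMod T = a := by
    refine minMod_eq_of_forall_le (fun x hx => ?_) hx₀ hTx₀
    rw [← pow_le_pow_iff_left₀ ha₀ (norm_nonneg _) two_ne_zero, hT, hx]
    have := norm_inner_le_norm (𝕜 := ℂ) k x
    rw [hx, mul_one] at this
    nlinarith [norm_nonneg ⟪k, x⟫]
  exact ⟨hmin, x₀, hx₀, hTx₀.trans hmin.symm⟩

end MinModulus

section Multiplication

lemma coeFn_Mmul (φ : Linf) (f : L2) : ⇑(Mmul φ f) =ᵐ[μT] fun x => φ x * f x :=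
  (memL2_smul φ f).coeFn_toLp

lemma coeFn_toL2 (φ : Linf) : ⇑(toL2 φ) =ᵐ[μT] ⇑φ :=
  ((Lp.memLp φ).mono_exponent le_top).coeFn_toLp

lemma inner_eq_integral_of_ae {f g : L2} {F G : 𝕋c → ℂ} (hf : ⇑f =ᵐ[μT] F)
    (hg : ⇑g =ᵐ[μT] G) : ⟪f, g⟫ = ∫ x, conj (F x) * G x ∂μT := by
  rw [L2.inner_def]
  refine integral_congr_ae ?_
  filter_upwards [hf, hg] with x hfx hgx
  rw [RCLike.inner_apply, hfx, hgx, mul_comm]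

lemma ae_conj_fourierLp_top (n : ℤ) :
    ∀ᵐ x ∂μT, conj ((fourierLp ⊤ n : Linf) x) = (fourierLp ⊤ (-n) : Linf) x := by
  filter_upwards [coeFn_fourierLp ⊤ n, coeFn_fourierLp ⊤ (-n)] with x hn hneg
  rw [hn, hneg, fourier_neg]

lemma ae_norm_fourierLp_top (n : ℤ) : ∀ᵐ x ∂μT, ‖(fourierLp ⊤ n : Linf) x‖ = 1 := by
  filter_upwards [coeFn_fourierLp ⊤ n] with x hx
  rw [hx, fourier_apply, Circle.norm_coe]

lemma inner_Mmul_left_of_ae_conj_eq {φ ψ : Linf} (h : ∀ᵐ x ∂μT, conj (φ x) = ψ x)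
    (f g : L2) : ⟪Mmul φ f, g⟫ = ⟪f, Mmul ψ g⟫ := by
  rw [inner_eq_integral_of_ae (coeFn_Mmul φ f) .rfl, inner_eq_integral_of_ae .rfl (coeFn_Mmul ψ g)]
  refine integral_congr_ae ?_
  filter_upwards [h] with x hx
  rw [map_mul, hx]
  ring

lemma inner_Mmul_fourierLp_top (n : ℤ) (f g : L2) :
    ⟪Mmul (fourierLp ⊤ n) f, g⟫ = ⟪f, Mmul (fourierLp ⊤ (-n)) g⟫ :=
  inner_Mmul_left_of_ae_conj_eq (ae_conj_fourierLp_top n) f g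

lemma inner_Mmul_e1 (f g : L2) : ⟪Mmul e1 f, g⟫ = ⟪f, Mmul eneg1 g⟫ :=
  inner_Mmul_fourierLp_top 1 f g

lemma inner_Mmul_eneg1 (f g : L2) : ⟪Mmul eneg1 f, g⟫ = ⟪f, Mmul e1 g⟫ := by
  rw [eneg1, inner_Mmul_fourierLp_top, neg_neg, e1]

lemma inner_Mmul_Mmul_of_ae_norm_eq_one {φ : Linf} (h : ∀ᵐ x ∂μT, ‖φ x‖ = 1) (f g : L2) :
    ⟪Mmul φ f, Mmul φ g⟫ = ⟪f, g⟫ := by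
  rw [inner_eq_integral_of_ae (coeFn_Mmul φ f) (coeFn_Mmul φ g),
    inner_eq_integral_of_ae .rfl .rfl]
  refine integral_congr_ae ?_
  filter_upwards [h] with x hx
  have hφ : conj (φ x) * φ x = 1 := by rw [Complex.conj_mul', hx]; norm_num
  rw [map_mul]
  linear_combination (conj (f x) * g x) * hφ

lemma norm_Mmul_of_ae_norm_eq_one {φ : Linf} (h : ∀ᵐ x ∂μT, ‖φ x‖ = 1) (f : L2) :
    ‖Mmul φ f‖ = ‖f‖ := by
  rw [@norm_eq_sqrt_re_inner ℂ, @norm_eq_sqrt_re_inner ℂ, inner_Mmul_Mmul_of_ae_norm_eq_one h]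

lemma Mmul_comm (φ ψ : Linf) (f : L2) : Mmul φ (Mmul ψ f) = Mmul ψ (Mmul φ f) := by
  refine Lp.ext ?_
  filter_upwards [coeFn_Mmul φ (Mmul ψ f), coeFn_Mmul ψ f, coeFn_Mmul ψ (Mmul φ f),
    coeFn_Mmul φ f] with x h1 h2 h3 h4
  rw [h1, h2, h3, h4]
  ring

lemma Mmul_fourierLp (m n : ℤ) : Mmul (fourierLp ⊤ m) 𝐞 n = 𝐞 (m + n) := by
  refine Lp.ext ?_
  filter_upwards [coeFn_Mmul (fourierLp ⊤ m) 𝐞 n, coeFn_fourierLp ⊤ m,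
    coeFn_fourierLp 2 n, coeFn_fourierLp 2 (m + n)] with x h1 h2 h3 h4
  rw [h1, h2, h3, h4, fourier_add]

lemma Mmul_eneg1_fourierLp_zero : Mmul eneg1 𝐞 0 = 𝐞 (-1) := Mmul_fourierLp (-1) 0

lemma Mmul_fourierLp_zero (φ : Linf) : Mmul φ 𝐞 0 = toL2 φ := by
  refine Lp.ext ?_
  filter_upwards [coeFn_Mmul φ 𝐞 0, coeFn_fourierLp 2 0, coeFn_toL2 φ] with x h1 h2 h3
  rw [h1, h2, h3, fourier_zero, mul_one]

lemma Mmul_fourierLp_neg_one (φ : Linf) : Mmul φ 𝐞 (-1) = Mmul eneg1 (toL2 φ) := by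
  rw [← Mmul_eneg1_fourierLp_zero, Mmul_comm, Mmul_fourierLp_zero]

lemma norm_fourierLp_two (n : ℤ) : ‖𝐞 n‖ = 1 := by
  simpa only [coe_fourierBasis] using (fourierBasis (T := 2 * Real.pi)).orthonormal.1 n

lemma inner_fourierLp_eq_fourierCoeff (n : ℤ) (f : L2) : ⟪𝐞 n, f⟫ = fourierCoeff (⇑f) n := by
  rw [inner_eq_integral_of_ae (coeFn_fourierLp 2 n) .rfl, fourierCoeff]
  refine integral_congr_ae (Filter.Eventually.of_forall fun x => ?_)
  dsimp only
  rw [fourier_neg, smul_eq_mul]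

end Multiplication

section Hardy

lemma map_eq_zero_of_mem_H2 {T : L2 →L[ℂ] ℂ} (hT : ∀ n : ℕ, T 𝐞 n = 0) {f : L2}
    (hf : f ∈ H2) : T f = 0 := by
  have hle : H2 ≤ LinearMap.ker (T : L2 →ₗ[ℂ] ℂ) := by
    refine Submodule.topologicalClosure_minimal _ ?_ T.isClosed_ker
    rw [Submodule.span_le]
    rintro _ ⟨n, rfl⟩
    exact hT n
  exact hle hf

lemma mem_H2_iff {f : L2} : f ∈ H2 ↔ ∀ n < 0, ⟪𝐞 n, f⟫ = 0 := by
  refine ⟨fun hf n hn => ?_, fun h => ?_⟩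
  · exact map_eq_zero_of_mem_H2 (T := innerSL ℂ 𝐞 n)
      (fun m => inner_fourierLp_eq_zero (by omega)) hf
  · rw [H2, ← SetLike.mem_coe, Submodule.topologicalClosure_coe]
    refine mem_closure_of_tendsto (hasSum_fourier_series_L2 f) (.of_forall fun s => ?_)
    refine Submodule.sum_mem _ fun n _ => ?_
    rcases lt_or_ge n 0 with hn | hn
    · rw [← inner_fourierLp_eq_fourierCoeff, h n hn, zero_smul]
      exact Submodule.zero_mem _
    · refine Submodule.smul_mem _ _ (Submodule.subset_span ⟨n.toNat, ?_⟩)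
      simp only [Int.toNat_of_nonneg hn]

lemma fourierLp_mem_H2 (n : ℕ) : 𝐞 n ∈ H2 :=
  Submodule.le_topologicalClosure _ (Submodule.subset_span ⟨n, rfl⟩)

lemma toL2_fourierLp_top (n : ℤ) : toL2 (fourierLp ⊤ n) = 𝐞 n := by
  refine Lp.ext ?_
  filter_upwards [coeFn_toL2 (fourierLp ⊤ n), coeFn_fourierLp ⊤ n, coeFn_fourierLp 2 n]
    with x h1 h2 h3
  rw [h1, h2, h3]

lemma memHinf_e1 : MemHinf e1 := by
  rw [MemHinf, e1, toL2_fourierLp_top]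
  exact fourierLp_mem_H2 1

lemma inner_fourierLp_Mmul_fourierLp (n m : ℤ) (φ : Linf) :
    ⟪𝐞 n, Mmul φ 𝐞 m⟫ = ⟪𝐞 (n - m), toL2 φ⟫ :=
  calc ⟪𝐞 n, Mmul φ 𝐞 m⟫ = ⟪𝐞 n, Mmul (fourierLp ⊤ m) (toL2 φ)⟫ := by
        rw [← Mmul_fourierLp_zero, Mmul_comm, Mmul_fourierLp, add_zero]
    _ = ⟪Mmul (fourierLp ⊤ (-m)) 𝐞 n, toL2 φ⟫ := by rw [inner_Mmul_fourierLp_top, neg_neg]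
    _ = ⟪𝐞 (n - m), toL2 φ⟫ := by rw [Mmul_fourierLp, neg_add_eq_sub]

lemma Mmul_mem_H2 {φ : Linf} (hφ : MemHinf φ) {f : L2} (hf : f ∈ H2) : Mmul φ f ∈ H2 := by
  refine mem_H2_iff.2 fun n hn => ?_
  refine map_eq_zero_of_mem_H2 (T := innerSL ℂ 𝐞 n ∘L Mmul φ) (fun m => ?_) hf
  simp only [ContinuousLinearMap.comp_apply, innerSL_apply_apply]
  rw [inner_fourierLp_Mmul_fourierLp]
  exact mem_H2_iff.1 hφ _ (by omega)

lemma inner_fourierLp_zero_Mmul {φ : Linf} (hφ : MemHinf φ) {f : L2} (hf : f ∈ H2) :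
    ⟪𝐞 0, Mmul φ f⟫ = ⟪𝐞 0, toL2 φ⟫ * ⟪𝐞 0, f⟫ := by
  set c := ⟪𝐞 0, toL2 φ⟫
  have := map_eq_zero_of_mem_H2 (T := innerSL ℂ 𝐞 0 ∘L Mmul φ - c • innerSL ℂ 𝐞 0)
    (fun m => ?_) hf
  · simpa [sub_eq_zero] using this
  simp only [_root_.sub_apply, ContinuousLinearMap.comp_apply,
    _root_.smul_apply, innerSL_apply_apply, smul_eq_mul]
  rw [inner_fourierLp_Mmul_fourierLp]
  rcases Nat.eq_zero_or_pos m with rfl | hm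
  · rw [Nat.cast_zero, sub_zero, inner_self_eq_norm_sq_to_K, norm_fourierLp_two]
    simp [c]
  · rw [mem_H2_iff.1 hφ _ (by omega), inner_fourierLp_eq_zero (by omega), mul_zero, sub_zero]

lemma inner_fourierLp_zero_Mmul_e1 {f : L2} (hf : f ∈ H2) : ⟪𝐞 0, Mmul e1 f⟫ = 0 := by
  rw [← inner_Mmul_eneg1, Mmul_eneg1_fourierLp_zero]
  exact mem_H2_iff.1 hf _ (by norm_num)

lemma Mmul_eneg1_sub_mem_H2 {f : L2} (hf : f ∈ H2) : Mmul eneg1 (f - ⟪𝐞 0, f⟫ • 𝐞 0) ∈ H2 := by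
  refine mem_H2_iff.2 fun n hn => ?_
  rw [eneg1, ← inner_Mmul_fourierLp_top 1, Mmul_fourierLp, inner_sub_right, inner_smul_right]
  rcases (show n ≤ -1 by omega).eq_or_lt with rfl | hn1
  · rw [show (1 : ℤ) + -1 = 0 by norm_num, inner_self_eq_norm_sq_to_K, norm_fourierLp_two]
    simp
  · rw [mem_H2_iff.1 hf _ (by omega), inner_fourierLp_eq_zero (by omega), mul_zero, sub_zero]

end Hardy

section ModelSpace

variable {u : Linf}

lemma mem_Ku_iff {f : L2} : f ∈ Ku u ↔ f ∈ H2 ∧ ∀ h ∈ H2, ⟪Mmul u h, f⟫ = 0 := by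
  refine Submodule.mem_inf.trans (and_congr_right fun _ => ?_)
  rw [uH2, Submodule.mem_orthogonal]
  exact ⟨fun hf h hh => hf _ (Submodule.mem_map_of_mem hh),
    fun hf _ ⟨h, hh, hy⟩ => hy ▸ hf h hh⟩

lemma inner_fourierLp_zero_toL2 : ⟪𝐞 0, toL2 u⟫ = coef0 u := by
  rw [inner_fourierLp_eq_fourierCoeff, coef0, fourierCoeff, fourierCoeff]
  exact integral_congr_ae (by filter_upwards [coeFn_toL2 u] with x hx; rw [hx])

lemma norm_toL2 (hu : IsInnerFn u) : ‖toL2 u‖ = 1 := by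
  rw [← Mmul_fourierLp_zero, norm_Mmul_of_ae_norm_eq_one hu.unimod, norm_fourierLp_two]

lemma inner_Mmul_toL2 (hu : IsInnerFn u) (h : L2) : ⟪Mmul u h, toL2 u⟫ = ⟪h, 𝐞 0⟫ := by
  rw [← Mmul_fourierLp_zero u, inner_Mmul_Mmul_of_ae_norm_eq_one hu.unimod]

lemma inner_toL2_eq_zero_of_mem_Ku {f : L2} (hf : f ∈ Ku u) : ⟪toL2 u, f⟫ = 0 := by
  rw [← Mmul_fourierLp_zero u]
  exact (mem_Ku_iff.1 hf).2 _ (fourierLp_mem_H2 0)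

lemma inner_Mmul_fourierLp_zero_of_mem_H2 (hu : IsInnerFn u) {h : L2} (hh : h ∈ H2) :
    ⟪Mmul u h, 𝐞 0⟫ = conj (coef0 u * ⟪𝐞 0, h⟫) := by
  rw [← inner_conj_symm, inner_fourierLp_zero_Mmul hu.memH2 hh, inner_fourierLp_zero_toL2]

/-- `k₀`, the reproducing kernel of `K_u` at `0`. -/
def kernelZero (u : Linf) : L2 := 𝐞 0 - conj (coef0 u) • toL2 u

/-- `k̃₀`, the image of `kernelZero u` under the conjugation `f ↦ u z̄ f̄` of `K_u`. -/
def conjKernelZero (u : Linf) : L2 := Mmul eneg1 (toL2 u - coef0 u • 𝐞 0)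

lemma kernelZero_mem_Ku (hu : IsInnerFn u) : kernelZero u ∈ Ku u := by
  refine mem_Ku_iff.2 ⟨H2.sub_mem (fourierLp_mem_H2 0) (H2.smul_mem _ hu.memH2), fun h hh => ?_⟩
  rw [kernelZero, inner_sub_right, inner_smul_right, inner_Mmul_fourierLp_zero_of_mem_H2 hu hh,
    inner_Mmul_toL2 hu, ← inner_conj_symm h, map_mul]
  ring

lemma inner_kernelZero {f : L2} (hf : f ∈ Ku u) :
    ⟪kernelZero u, f⟫ = ⟪𝐞 0, f⟫ := by
  rw [kernelZero, inner_sub_left, inner_smul_left, inner_toL2_eq_zero_of_mem_Ku hf, mul_zero,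
    sub_zero]

lemma norm_kernelZero_sq (hu : IsInnerFn u) : ‖kernelZero u‖ ^ 2 = 1 - ‖coef0 u‖ ^ 2 := by
  have h := norm_sub_inner_smul_sq 𝐞 0 (norm_toL2 hu)
  rwa [← inner_conj_symm, inner_fourierLp_zero_toL2, norm_fourierLp_two, one_pow,
    RCLike.norm_conj] at h

lemma norm_toL2_sub_coef0_smul_sq (hu : IsInnerFn u) :
    ‖toL2 u - coef0 u • 𝐞 0‖ ^ 2 = 1 - ‖coef0 u‖ ^ 2 := by
  have h := norm_sub_inner_smul_sq (toL2 u) (norm_fourierLp_two 0)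
  rwa [inner_fourierLp_zero_toL2, norm_toL2 hu, one_pow] at h

lemma norm_coef0_lt_one (hu : IsInnerFn u) (hnc : Nonconst u) : ‖coef0 u‖ < 1 := by
  have h := norm_toL2_sub_coef0_smul_sq hu
  refine lt_of_le_of_ne (by nlinarith [norm_nonneg (toL2 u - coef0 u • 𝐞 0)]) fun h1 => hnc ?_
  rw [h1, one_pow, sub_self, sq_eq_zero_iff, norm_eq_zero, sub_eq_zero] at h
  refine ⟨coef0 u, ?_⟩
  filter_upwards [coeFn_toL2 u, Lp.coeFn_smul (coef0 u) 𝐞 0, coeFn_fourierLp 2 0]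
    with x hu hc h0
  rw [← hu, h, hc, Pi.smul_apply, h0, fourier_zero, smul_eq_mul, mul_one]

lemma conjKernelZero_mem_Ku (hu : IsInnerFn u) : conjKernelZero u ∈ Ku u := by
  refine mem_Ku_iff.2 ⟨?_, fun h hh => ?_⟩
  · rw [conjKernelZero, ← inner_fourierLp_zero_toL2]
    exact Mmul_eneg1_sub_mem_H2 hu.memH2
  rw [conjKernelZero, ← inner_Mmul_e1, Mmul_comm, inner_sub_right, inner_smul_right,
    inner_Mmul_toL2 hu, inner_Mmul_fourierLp_zero_of_mem_H2 hu (Mmul_mem_H2 memHinf_e1 hh),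
    ← inner_conj_symm, inner_fourierLp_zero_Mmul_e1 hh]
  simp

lemma norm_conjKernelZero_sq (hu : IsInnerFn u) :
    ‖conjKernelZero u‖ ^ 2 = 1 - ‖coef0 u‖ ^ 2 := by
  rw [conjKernelZero, norm_Mmul_of_ae_norm_eq_one (φ := eneg1) (ae_norm_fourierLp_top (-1)),
    norm_toL2_sub_coef0_smul_sq hu]

lemma inner_toL2_Mmul_e1 {f : L2} (hf : f ∈ H2) :
    ⟪toL2 u, Mmul e1 f⟫ = ⟪conjKernelZero u, f⟫ := by
  rw [conjKernelZero, inner_Mmul_eneg1, inner_sub_left, inner_smul_left,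
    inner_fourierLp_zero_Mmul_e1 hf, mul_zero, sub_zero]

end ModelSpace

section CompressedShift

variable {u : Linf}

lemma adjoint_Aop_of_ae_conj_eq {φ ψ : Linf} (h : ∀ᵐ x ∂μT, conj (φ x) = ψ x) :
    ContinuousLinearMap.adjoint (Aop u φ) = Aop u ψ := by
  refine ((ContinuousLinearMap.eq_adjoint_iff _ _).2 fun f g => ?_).symm
  change ⟪(Ku u).orthogonalProjectionOnto (Mmul ψ f), g⟫
    = ⟪f, (Ku u).orthogonalProjectionOnto (Mmul φ g)⟫
  rw [Submodule.inner_orthogonalProjectionOnto_eq_of_mem_right,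
    Submodule.inner_orthogonalProjectionOnto_eq_of_mem_left, ← inner_conj_symm (f : L2),
    inner_Mmul_left_of_ae_conj_eq h, inner_conj_symm]

/-- Writing `h = h(0) + z h'` with `h' ∈ H²`, the part `u z h'` is orthogonal to `z f`. -/
lemma inner_Mmul_Mmul_e1_of_mem_Ku {h f : L2} (hh : h ∈ H2) (hf : f ∈ Ku u) :
    ⟪Mmul u h, Mmul e1 f⟫ = conj ⟪𝐞 0, h⟫ * ⟪toL2 u, Mmul e1 f⟫ := by
  have hdecomp : Mmul eneg1 h
      = Mmul eneg1 (h - ⟪𝐞 0, h⟫ • 𝐞 0) + ⟪𝐞 0, h⟫ • 𝐞 (-1) := by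
    rw [map_sub, map_smul, Mmul_eneg1_fourierLp_zero, sub_add_cancel]
  rw [← inner_Mmul_eneg1, Mmul_comm, hdecomp, map_add, map_smul, inner_add_left, inner_smul_left,
    (mem_Ku_iff.1 hf).2 _ (Mmul_eneg1_sub_mem_H2 hh), zero_add, Mmul_fourierLp_neg_one,
    inner_Mmul_eneg1]

lemma coe_Aop_e1_apply (hu : IsInnerFn u) (f : Ku u) :
    (Aop u e1 f : L2) = Mmul e1 f - ⟪toL2 u, Mmul e1 f⟫ • toL2 u := by
  have hfH : (f : L2) ∈ H2 := (mem_Ku_iff.1 f.2).1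
  change (Ku u).starProjection (Mmul e1 f) = _
  refine Submodule.eq_starProjection_of_mem_of_inner_eq_zero ?_ fun w hw => ?_
  · refine mem_Ku_iff.2 ⟨H2.sub_mem (Mmul_mem_H2 memHinf_e1 hfH) (H2.smul_mem _ hu.memH2),
      fun h hh => ?_⟩
    rw [inner_sub_right, inner_smul_right, inner_Mmul_Mmul_e1_of_mem_Ku hh f.2,
      inner_Mmul_toL2 hu, ← inner_conj_symm h]
    ring
  · rw [sub_sub_cancel, inner_smul_left, inner_toL2_eq_zero_of_mem_Ku hw, mul_zero]

lemma norm_sq_Aop_e1_apply (hu : IsInnerFn u) (f : Ku u) :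
    ‖Aop u e1 f‖ ^ 2 = ‖f‖ ^ 2 - ‖⟪conjKernelZero u, f⟫‖ ^ 2 := by
  have h := norm_sub_inner_smul_sq (Mmul e1 f) (norm_toL2 hu)
  rwa [← coe_Aop_e1_apply hu, norm_Mmul_of_ae_norm_eq_one (φ := e1) (ae_norm_fourierLp_top 1),
    inner_toL2_Mmul_e1 (mem_Ku_iff.1 f.2).1] at h

lemma coe_Aop_eneg1_apply (hu : IsInnerFn u) (f : Ku u) :
    (Aop u eneg1 f : L2) = Mmul eneg1 (f - ⟪𝐞 0, f⟫ • 𝐞 0) := by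
  have hfH : (f : L2) ∈ H2 := (mem_Ku_iff.1 f.2).1
  change (Ku u).starProjection (Mmul eneg1 f) = _
  refine Submodule.eq_starProjection_of_mem_of_inner_eq_zero ?_ fun w hw => ?_
  · refine mem_Ku_iff.2 ⟨Mmul_eneg1_sub_mem_H2 hfH, fun h hh => ?_⟩
    rw [← inner_Mmul_e1, inner_sub_right, inner_smul_right,
      ← inner_conj_symm (Mmul e1 (Mmul u h)) 𝐞 0,
      inner_fourierLp_zero_Mmul_e1 (Mmul_mem_H2 hu.memH2 hh), Mmul_comm,
      (mem_Ku_iff.1 f.2).2 _ (Mmul_mem_H2 memHinf_e1 hh)]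
    simp
  · rw [map_sub, map_smul, sub_sub_cancel, Mmul_eneg1_fourierLp_zero, inner_smul_left,
      mem_H2_iff.1 (mem_Ku_iff.1 hw).1 _ (by norm_num), mul_zero]

lemma norm_sq_Aop_eneg1_apply (hu : IsInnerFn u) (f : Ku u) :
    ‖Aop u eneg1 f‖ ^ 2 = ‖f‖ ^ 2 - ‖⟪kernelZero u, f⟫‖ ^ 2 := by
  have h := norm_sub_inner_smul_sq (f : L2) (norm_fourierLp_two 0)
  rwa [← norm_Mmul_of_ae_norm_eq_one (φ := eneg1) (ae_norm_fourierLp_top (-1)),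
    ← coe_Aop_eneg1_apply hu, ← inner_kernelZero f.2] at h

end CompressedShift

/-- `m(S_u) = |u(0)| = m(S_u*)` for the compressed shift `S_u = A_{e₁}` on
the model space `K_u`, and both `S_u`, `S_u*` attain their minimum modulus. -/
theorem minMod_compressed_shift (u : Linf) (hu : IsInnerFn u) (hnc : Nonconst u) :
    minMod (Aop u e1) = ‖coef0 u‖
    ∧ minMod (ContinuousLinearMap.adjoint (Aop u e1)) = ‖coef0 u‖
    ∧ (∃ f : Ku u, ‖f‖ = 1 ∧ ‖Aop u e1 f‖ = minMod (Aop u e1))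
    ∧ (∃ f : Ku u, ‖f‖ = 1 ∧
        ‖ContinuousLinearMap.adjoint (Aop u e1) f‖
          = minMod (ContinuousLinearMap.adjoint (Aop u e1))) := by
  have ha := norm_coef0_lt_one hu hnc
  obtain ⟨hS, hS_attained⟩ := minMod_eq_of_norm_sq_apply (norm_nonneg _) ha
    (E := Ku u) (k := ⟨_, conjKernelZero_mem_Ku hu⟩) (norm_conjKernelZero_sq hu)
    (fun f => by rw [Submodule.coe_inner]; exact norm_sq_Aop_e1_apply hu f)
  obtain ⟨hS', hS'_attained⟩ := minMod_eq_of_norm_sq_apply (norm_nonneg _) ha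
    (E := Ku u) (k := ⟨_, kernelZero_mem_Ku hu⟩) (norm_kernelZero_sq hu)
    (fun f => by rw [Submodule.coe_inner]; exact norm_sq_Aop_eneg1_apply hu f)
  have hadj : ContinuousLinearMap.adjoint (Aop u e1) = Aop u eneg1 :=
    adjoint_Aop_of_ae_conj_eq (ae_conj_fourierLp_top 1)
  rw [hadj]
  exact ⟨hS, hS', hS_attained, hS'_attained⟩

end DTTO
end
end
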